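/- With r'(h) = ∫_{1-h}^{1} dx/√(1-x²) and r(h) = ∫_{1-h}^{1} √(4(1-x²)^{3/2}+x²)/(2(1-x²)^{3/4}) dx, the ratio r'(h)/r(h)^{3/2} tends to a positive constant times h^{1/8} as h → 0⁺; in particular r'(h)/r(h)^{3/2} → 0 as h → 0⁺. -/

import Mathlib

open intervalIntegral Real Filter Set

noncomputable def rPrime (h : ℝ) : ℝ :=
  ∫ x in (1 - h)..1, 1 / Real.sqrt (1 - x ^ 2)

noncomputable def rQuartic (h : ℝ) : ℝ :=
  ∫ x in (1 - h)..1,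
    Real.sqrt (4 * (1 - x ^ 2) ^ ((3 : ℝ) / 2) + x ^ 2) / (2 * (1 - x ^ 2) ^ ((3 : ℝ) / 4))

lemma intInt_one_sub_rpow {p : ℝ} (hp : -1 < p) (a : ℝ) :
    IntervalIntegrable (fun x => (1 - x) ^ p) MeasureTheory.volume a 1 := by
  have h := (intervalIntegrable_rpow' (a := 1 - a) (b := 1 - 1) hp).comp_sub_left 1
  simpa using h

lemma integral_one_sub_rpow {p : ℝ} (hp : -1 < p) (h : ℝ) :
    ∫ x in (1-h)..1, (1 - x) ^ p = h ^ (p+1) / (p+1) := by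
  rw [intervalIntegral.integral_comp_sub_left (fun x => x ^ p) 1]
  rw [integral_rpow (Or.inl hp)]
  rw [show (1:ℝ) - (1 - h) = h by ring, show (1:ℝ) - 1 = 0 by ring,
    Real.zero_rpow (by linarith)]
  ring

/-- Generic asymptotic lemma: if `g x = φ x * (1-x)^p` near `x = 1` with `φ` continuous
at `1` with positive value `c` and `-1 < p < 0`, then
`(∫_{1-h}^1 g) / h^(p+1) → c/(p+1)` as `h → 0⁺`. -/
lemma gen_tendsto {g φ : ℝ → ℝ} {p c : ℝ}
    (hp : -1 < p) (hp0 : p < 0) (hc : 0 < c)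
    (hmeas : Measurable g)
    (heq : ∀ x ∈ Ico (1/2 : ℝ) 1, g x = φ x * (1 - x) ^ p)
    (hg1 : g 1 = 0)
    (hφ : ContinuousAt φ 1) (hφ1 : φ 1 = c) :
    Tendsto (fun h : ℝ => (∫ x in (1 - h)..1, g x) / h ^ (p + 1))
      (nhdsWithin 0 (Ioi 0)) (nhds (c / (p + 1))) := by
  have hp1 : 0 < p + 1 := by linarith
  rw [Metric.tendsto_nhdsWithin_nhds]
  intro ε' hε'
  set ε : ℝ := min (ε' * (p+1) / 2) (c/2) with hεdef
  have hε : 0 < ε := lt_min (by positivity) (by positivity)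
  obtain ⟨δ₁, hδ₁, hδ₁p⟩ := Metric.continuousAt_iff.mp hφ ε hε
  refine ⟨min δ₁ (1/2), lt_min hδ₁ (by norm_num), ?_⟩
  intro h hh hdist
  have hh' : 0 < h := hh
  rw [Real.dist_eq, sub_zero, abs_of_pos hh'] at hdist
  have hhδ₁ : h < δ₁ := lt_of_lt_of_le hdist (min_le_left _ _)
  have hhhalf : h < 1/2 := lt_of_lt_of_le hdist (min_le_right _ _)
  -- pointwise bounds on Icc (1-h) 1
  have key : ∀ x ∈ Icc (1-h) 1,
      (c - ε) * (1 - x) ^ p ≤ g x ∧ g x ≤ (c + ε) * (1 - x) ^ p := by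
    intro x hx
    rcases eq_or_lt_of_le hx.2 with rfl | hx1
    · simp [hg1, Real.zero_rpow (by linarith : p ≠ 0)]
    · have hxIco : x ∈ Ico (1/2 : ℝ) 1 := ⟨by linarith [hx.1], hx1⟩
      have hφx : |φ x - c| ≤ ε := by
        have : dist x 1 < δ₁ := by
          rw [Real.dist_eq, abs_of_nonpos (by linarith)]
          linarith [hx.1]
        have := hδ₁p this
        rw [Real.dist_eq, hφ1] at this
        exact this.le
      rw [abs_le] at hφx
      have hpow : (0:ℝ) ≤ (1 - x) ^ p := Real.rpow_nonneg (by linarith) _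
      rw [heq x hxIco]
      constructor
      · exact mul_le_mul_of_nonneg_right (by linarith [hφx.1]) hpow
      · exact mul_le_mul_of_nonneg_right (by linarith [hφx.2]) hpow
  have hab : (1:ℝ) - h ≤ 1 := by linarith
  have hlowint : IntervalIntegrable (fun x => (c - ε) * (1 - x) ^ p)
      MeasureTheory.volume (1-h) 1 := (intInt_one_sub_rpow hp _).const_mul _
  have hhighint : IntervalIntegrable (fun x => (c + ε) * (1 - x) ^ p)
      MeasureTheory.volume (1-h) 1 := (intInt_one_sub_rpow hp _).const_mul _
  -- integrability of g
  have hgint : IntervalIntegrable g MeasureTheory.volume (1-h) 1 := by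
    apply hhighint.mono_fun hmeas.aestronglyMeasurable
    rw [Set.uIoc_of_le hab]
    refine (MeasureTheory.ae_restrict_iff' measurableSet_Ioc).mpr (MeasureTheory.ae_of_all _ ?_)
    intro x hx
    have hx' : x ∈ Icc (1-h) 1 := Ioc_subset_Icc_self hx
    obtain ⟨h1, h2⟩ := key x hx'
    have hεc : 0 < c - ε := by
      have : ε ≤ c/2 := min_le_right _ _
      linarith
    have hpow : (0:ℝ) ≤ (1 - x) ^ p := Real.rpow_nonneg (by linarith [hx'.2]) _
    have hg0 : 0 ≤ g x := le_trans (by positivity) h1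
    simp only [Real.norm_eq_abs, abs_of_nonneg hg0]
    rw [abs_of_nonneg (by positivity)]
    exact h2
  have low : (c - ε) * (h ^ (p+1) / (p+1)) ≤ ∫ x in (1-h)..1, g x := by
    have := intervalIntegral.integral_mono_on hab hlowint hgint (fun x hx => (key x hx).1)
    rwa [intervalIntegral.integral_const_mul, integral_one_sub_rpow hp] at this
  have high : (∫ x in (1-h)..1, g x) ≤ (c + ε) * (h ^ (p+1) / (p+1)) := by
    have := intervalIntegral.integral_mono_on hab hgint hhighint (fun x hx => (key x hx).2)
    rwa [intervalIntegral.integral_const_mul, integral_one_sub_rpow hp] at this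
  have hhp : 0 < h ^ (p+1) := Real.rpow_pos_of_pos hh' _
  have hI1 : (∫ x in (1-h)..1, g x) / h ^ (p+1) ≤ (c + ε) / (p+1) := by
    rw [div_le_iff₀ hhp]
    calc (∫ x in (1-h)..1, g x) ≤ (c + ε) * (h ^ (p+1) / (p+1)) := high
      _ = (c + ε) / (p+1) * h ^ (p+1) := by ring
  have hI2 : (c - ε) / (p+1) ≤ (∫ x in (1-h)..1, g x) / h ^ (p+1) := by
    rw [le_div_iff₀ hhp]
    calc (c - ε) / (p+1) * h ^ (p+1) = (c - ε) * (h ^ (p+1) / (p+1)) := by ring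
      _ ≤ _ := low
  rw [Real.dist_eq]
  have e1 : (c - ε)/(p+1) = c/(p+1) - ε/(p+1) := by ring
  have e2 : (c + ε)/(p+1) = c/(p+1) + ε/(p+1) := by ring
  have hεsmall : ε / (p+1) < ε' := by
    have h1 : ε ≤ ε' * (p+1) / 2 := min_le_left _ _
    have h2 : ε / (p+1) ≤ (ε' * (p+1) / 2) / (p+1) :=
      div_le_div_of_nonneg_right h1 hp1.le
    have h3 : (ε' * (p+1) / 2) / (p+1) = ε' / 2 := by field_simp
    rw [h3] at h2
    linarith
  rw [abs_lt]
  constructor <;> [linarith [hI2, hεsmall]; linarith [hI1, hεsmall]]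

lemma tendsto_A :
    Tendsto (fun h : ℝ => rPrime h / h ^ ((1:ℝ)/2)) (nhdsWithin 0 (Ioi 0))
      (nhds ((2:ℝ) ^ (-((1:ℝ)/2)) / (-((1:ℝ)/2) + 1))) := by
  have hgen := gen_tendsto (g := fun x : ℝ => 1 / Real.sqrt (1 - x ^ 2))
    (φ := fun x : ℝ => (1+x) ^ (-((1:ℝ)/2))) (p := -((1:ℝ)/2)) (c := (2:ℝ) ^ (-((1:ℝ)/2)))
    (by norm_num) (by norm_num) (by positivity)
    (measurable_const.div (Real.continuous_sqrt.comp (by continuity)).measurable)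
    (fun x hx => by
      obtain ⟨h1, h2⟩ := hx
      rw [show (1:ℝ) - x^2 = (1-x)*(1+x) by ring, Real.sqrt_mul (by linarith),
        Real.sqrt_eq_rpow, Real.sqrt_eq_rpow, Real.rpow_neg (by linarith),
        Real.rpow_neg (by linarith), one_div, mul_inv, mul_comm])
    (by norm_num)
    (ContinuousAt.rpow_const (Continuous.continuousAt (by continuity)) (by left; norm_num))
    (by norm_num)
  apply hgen.congr
  intro h
  rw [rPrime]
  norm_num

lemma tendsto_B :
    Tendsto (fun h : ℝ => rQuartic h / h ^ ((1:ℝ)/4)) (nhdsWithin 0 (Ioi 0))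
      (nhds ((1 / (2 * (2:ℝ) ^ ((3:ℝ)/4))) / (-((3:ℝ)/4) + 1))) := by
  have cN : Continuous fun x : ℝ => Real.sqrt (4 * (1 - x ^ 2) ^ ((3 : ℝ) / 2) + x ^ 2) :=
    Real.continuous_sqrt.comp ((continuous_const.mul
      ((Real.continuous_rpow_const (by norm_num)).comp (by continuity))).add (continuous_pow 2))
  have cD : Continuous fun x : ℝ => 2 * (1 + x) ^ ((3:ℝ)/4) :=
    continuous_const.mul ((Real.continuous_rpow_const (by norm_num)).comp (by continuity))
  have hgen := gen_tendsto
    (g := fun x : ℝ =>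
      Real.sqrt (4 * (1 - x ^ 2) ^ ((3 : ℝ) / 2) + x ^ 2) / (2 * (1 - x ^ 2) ^ ((3 : ℝ) / 4)))
    (φ := fun x : ℝ =>
      Real.sqrt (4 * (1 - x ^ 2) ^ ((3 : ℝ) / 2) + x ^ 2) / (2 * (1+x) ^ ((3:ℝ)/4)))
    (p := -((3:ℝ)/4)) (c := 1 / (2 * (2:ℝ) ^ ((3:ℝ)/4)))
    (by norm_num) (by norm_num) (by positivity)
    (cN.measurable.div ((continuous_const.mul
      ((Real.continuous_rpow_const (by norm_num)).comp (by continuity))).measurable))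
    (fun x hx => by
      obtain ⟨h1, h2⟩ := hx
      have hd : ((1:ℝ) - x^2) ^ ((3:ℝ)/4) = (1-x)^((3:ℝ)/4) * (1+x)^((3:ℝ)/4) := by
        rw [show (1:ℝ) - x^2 = (1-x)*(1+x) by ring, Real.mul_rpow (by linarith) (by linarith)]
      rw [Real.rpow_neg (by linarith : (0:ℝ) ≤ 1 - x)]
      conv_lhs => rw [hd]
      ring)
    (by norm_num [Real.zero_rpow])
    (ContinuousAt.div cN.continuousAt cD.continuousAt (by positivity))
    (by norm_num [Real.zero_rpow])
  apply hgen.congr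
  intro h
  rw [rQuartic]
  norm_num

/-- r'(h)/r(h)^{3/2} ~ c · h^{1/8} as h → 0⁺ for some constant c > 0;
in particular the ratio tends to 0. -/
theorem ratio_asymptotic :
    (∃ c > (0 : ℝ),
      Tendsto (fun h : ℝ => rPrime h / (rQuartic h ^ ((3 : ℝ) / 2) * h ^ ((1 : ℝ) / 8)))
        (nhdsWithin 0 (Ioi 0)) (nhds c)) ∧
    Tendsto (fun h : ℝ => rPrime h / rQuartic h ^ ((3 : ℝ) / 2))
      (nhdsWithin 0 (Ioi 0)) (nhds 0) := by
  set LA : ℝ := (2:ℝ) ^ (-((1:ℝ)/2)) / (-((1:ℝ)/2) + 1) with hLA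
  set LB : ℝ := (1 / (2 * (2:ℝ) ^ ((3:ℝ)/4))) / (-((3:ℝ)/4) + 1) with hLB
  have hLBpos : 0 < LB := by rw [hLB]; positivity
  have hLApos : 0 < LA := by rw [hLA]; positivity
  have hA := tendsto_A
  have hB := tendsto_B
  set C : ℝ := LA / LB ^ ((3:ℝ)/2) with hC
  have hCpos : 0 < C := by rw [hC]; positivity
  have hten : Tendsto
      (fun h : ℝ => (rPrime h / h ^ ((1:ℝ)/2)) / (rQuartic h / h ^ ((1:ℝ)/4)) ^ ((3:ℝ)/2))
      (nhdsWithin 0 (Ioi 0)) (nhds C) :=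
    hA.div (hB.rpow_const (Or.inl hLBpos.ne')) (by positivity)
  have hev1 : ∀ᶠ h in nhdsWithin (0:ℝ) (Ioi 0), 0 < rQuartic h / h ^ ((1:ℝ)/4) :=
    hB.eventually (eventually_gt_nhds hLBpos)
  have hev2 : ∀ᶠ h in nhdsWithin (0:ℝ) (Ioi 0), h ∈ Ioi (0:ℝ) := eventually_mem_nhdsWithin
  have hmain : Tendsto (fun h : ℝ => rPrime h / (rQuartic h ^ ((3 : ℝ) / 2) * h ^ ((1 : ℝ) / 8)))
      (nhdsWithin 0 (Ioi 0)) (nhds C) := by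
    apply Filter.Tendsto.congr' _ hten
    filter_upwards [hev1, hev2] with h hBh hh
    have hhpos : (0:ℝ) < h := hh
    have h14 : (0:ℝ) < h ^ ((1:ℝ)/4) := Real.rpow_pos_of_pos hhpos _
    have key : rQuartic h ^ ((3:ℝ)/2)
        = (rQuartic h / h ^ ((1:ℝ)/4)) ^ ((3:ℝ)/2) * h ^ ((3:ℝ)/8) := by
      calc rQuartic h ^ ((3:ℝ)/2)
          = ((rQuartic h / h ^ ((1:ℝ)/4)) * h ^ ((1:ℝ)/4)) ^ ((3:ℝ)/2) := by
            rw [div_mul_cancel₀ _ h14.ne']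
        _ = (rQuartic h / h ^ ((1:ℝ)/4)) ^ ((3:ℝ)/2) * (h ^ ((1:ℝ)/4)) ^ ((3:ℝ)/2) :=
            Real.mul_rpow hBh.le h14.le
        _ = (rQuartic h / h ^ ((1:ℝ)/4)) ^ ((3:ℝ)/2) * h ^ ((3:ℝ)/8) := by
            rw [← Real.rpow_mul hhpos.le]; norm_num
    rw [key, mul_assoc, ← Real.rpow_add hhpos, show (3:ℝ)/8 + (1:ℝ)/8 = (1:ℝ)/2 by norm_num,
      div_mul_eq_div_div_swap]
  refine ⟨⟨C, hCpos, hmain⟩, ?_⟩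
  have h18 : Tendsto (fun h : ℝ => h ^ ((1:ℝ)/8)) (nhdsWithin 0 (Ioi 0)) (nhds 0) := by
    have hc : ContinuousAt (fun h : ℝ => h ^ ((1:ℝ)/8)) 0 :=
      Real.continuousAt_rpow_const 0 _ (Or.inr (by norm_num))
    have := hc.tendsto.mono_left (nhdsWithin_le_nhds : nhdsWithin (0:ℝ) (Ioi 0) ≤ nhds 0)
    simpa [Real.zero_rpow (by norm_num : (1:ℝ)/8 ≠ 0)] using this
  have hprod := hmain.mul h18
  rw [mul_zero] at hprod
  apply Filter.Tendsto.congr' _ hprod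
  filter_upwards [hev2] with h hh
  have h18ne : h ^ ((1:ℝ)/8) ≠ 0 := (Real.rpow_pos_of_pos hh _).ne'
  rw [← div_div, div_mul_cancel₀ _ h18ne]
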